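/- Let f: R^{2n×2n} → R be differentiable, M symplectic, and ∇f_M the Euclidean gradient at M. Then G := ∇f_M M^T M + J_{2n} M (∇f_M)^T J_{2n} M is a tangent vector to Sp(2n,R) at M, i.e., M^+ G is Hamiltonian (equivalently G M^+ = -M(G)^+ , i.e., (GM^+)^+ = -GM^+). -/

import Mathlib

open Matrix

noncomputable section

/-- The standard symplectic matrix `J = [[0, I],[-I, 0]]` of size `2m`. -/
def Jmat (m : ℕ) : Matrix (Fin m ⊕ Fin m) (Fin m ⊕ Fin m) ℝ :=
  Matrix.fromBlocks 0 1 (-1) 0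

/-- The symplectic inverse `A⁺ = J₂ₖᵀ Aᵀ J₂ₙ` of a `2n × 2k` real matrix. -/
def sympInv {n k : ℕ} (A : Matrix (Fin n ⊕ Fin n) (Fin k ⊕ Fin k) ℝ) :
    Matrix (Fin k ⊕ Fin k) (Fin n ⊕ Fin n) ℝ :=
  (Jmat k)ᵀ * Aᵀ * Jmat n

/-! The map `A ↦ A⁺` is an involutive anti-automorphism, and `M⁺ G = X - X⁺` for
`X = M⁺ ∇f Mᵀ M`; every matrix of the form `X - X⁺` is Hamiltonian. -/

lemma Jmat_eq_neg_J (m : ℕ) : Jmat m = -J (Fin m) ℝ := by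
  simp [Jmat, J, fromBlocks_neg]

lemma Jmat_transpose (m : ℕ) : (Jmat m)ᵀ = -Jmat m := by
  rw [Jmat_eq_neg_J, transpose_neg, J_transpose]

lemma Jmat_mul_self (m : ℕ) : Jmat m * Jmat m = -1 := by
  rw [Jmat_eq_neg_J, neg_mul_neg, J_squared]

lemma Jmat_mul_Jmat_mul (m : ℕ) {α : Type*} (X : Matrix (Fin m ⊕ Fin m) α ℝ) :
    Jmat m * (Jmat m * X) = -X := by
  rw [← Matrix.mul_assoc, Jmat_mul_self, Matrix.neg_mul, Matrix.one_mul]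

section sympInv

variable {n k l : ℕ}

lemma sympInv_sub (A B : Matrix (Fin n ⊕ Fin n) (Fin k ⊕ Fin k) ℝ) :
    sympInv (A - B) = sympInv A - sympInv B := by
  simp only [sympInv, transpose_sub, Matrix.mul_sub, Matrix.sub_mul]

lemma sympInv_mul (A : Matrix (Fin n ⊕ Fin n) (Fin k ⊕ Fin k) ℝ)
    (B : Matrix (Fin k ⊕ Fin k) (Fin l ⊕ Fin l) ℝ) :
    sympInv (A * B) = sympInv B * sympInv A := by
  simp only [sympInv, transpose_mul, Jmat_transpose, Matrix.mul_assoc, Matrix.neg_mul,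
    Matrix.mul_neg, neg_neg, Jmat_mul_Jmat_mul]

lemma sympInv_sympInv (A : Matrix (Fin n ⊕ Fin n) (Fin k ⊕ Fin k) ℝ) :
    sympInv (sympInv A) = A := by
  simp only [sympInv, transpose_mul, transpose_neg, transpose_transpose, Jmat_transpose,
    Matrix.mul_assoc, Matrix.neg_mul, Matrix.mul_neg, neg_neg, Jmat_mul_Jmat_mul, Jmat_mul_self,
    Matrix.mul_one]

lemma sympInv_transpose (A : Matrix (Fin n ⊕ Fin n) (Fin k ⊕ Fin k) ℝ) :
    sympInv Aᵀ = (Jmat n)ᵀ * A * Jmat k := by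
  rw [sympInv, transpose_transpose]

lemma sympInv_sub_sympInv_self (X : Matrix (Fin n ⊕ Fin n) (Fin n ⊕ Fin n) ℝ) :
    sympInv (X - sympInv X) = -(X - sympInv X) := by
  rw [sympInv_sub, sympInv_sympInv, neg_sub]

end sympInv

lemma sympInv_mul_gradient_eq_sub_sympInv (n : ℕ)
    (M gradf : Matrix (Fin n ⊕ Fin n) (Fin n ⊕ Fin n) ℝ) :
    sympInv M * (gradf * Mᵀ * M + Jmat n * M * gradfᵀ * Jmat n * M) =
      sympInv M * gradf * Mᵀ * M - sympInv (sympInv M * gradf * Mᵀ * M) := by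
  have hX : sympInv (sympInv M * gradf * Mᵀ * M) =
      -(sympInv M * (Jmat n * M * gradfᵀ * Jmat n * M)) := by
    rw [sympInv_mul, sympInv_mul, sympInv_mul, sympInv_sympInv, sympInv_transpose,
      sympInv.eq_1 gradf]
    simp only [Jmat_transpose, Matrix.neg_mul, Matrix.mul_neg, neg_neg, Matrix.mul_assoc,
      Jmat_mul_Jmat_mul]
  rw [hX, sub_neg_eq_add, Matrix.mul_add]
  simp only [Matrix.mul_assoc]

theorem stmt_16_general (n : ℕ) (M G gradf : Matrix (Fin n ⊕ Fin n) (Fin n ⊕ Fin n) ℝ)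
    (hG : G = gradf * Mᵀ * M + Jmat n * M * gradfᵀ * Jmat n * M) :
    sympInv (sympInv M * G) = -(sympInv M * G) := by
  rw [hG, sympInv_mul_gradient_eq_sub_sympInv]
  exact sympInv_sub_sympInv_self _

theorem stmt_16 (n : ℕ) (M G gradf : Matrix (Fin n ⊕ Fin n) (Fin n ⊕ Fin n) ℝ)
    (hM : sympInv M * M = 1)
    (hG : G = gradf * Mᵀ * M + Jmat n * M * gradfᵀ * Jmat n * M) :
    sympInv (sympInv M * G) = -(sympInv M * G) :=
  stmt_16_general n M G gradf hG
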